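/- arXiv:1803.08989 — 5 statements merged into one kernel-verified Lean document; each statement's English description precedes it below -/
import Mathlib

section
/- Let N ≥ 1, let aᵢⱼ ≥ 0 for all 1 ≤ i ≠ j ≤ N, and let L ∈ ℝ^{N×N} be the associated Laplacian matrix. Then 0 is a simple eigenvalue of L (i.e., the algebraic multiplicity of 0 as a root of the characteristic polynomial of L equals 1) if and only if the weighted digraph contains a directed spanning tree, i.e., there exists a node r such that for every node i there is a sequence of nodes r = k₀, k₁, …, k_m = i with a_{k_{s+1} k_s} > 0 for all 0 ≤ s < m. -/
open Matrix

set_option maxHeartbeats 1000000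

section LapAux
open Polynomial Finset


lemma my_charpoly_conj {n : Type*} [Fintype n] [DecidableEq n] {R : Type*} [CommRing R]
    (M P Q : Matrix n n R) (h : P * Q = 1) : (Q * M * P).charpoly = M.charpoly := by
  have h2 : Q * P = 1 := mul_eq_one_comm.mp h
  have hQP : (C : R →+* R[X]).mapMatrix Q * (C : R →+* R[X]).mapMatrix P = 1 := by
    rw [← _root_.map_mul (C : R →+* R[X]).mapMatrix Q P, h2, _root_.map_one (C : R →+* R[X]).mapMatrix]
  have key : charmatrix (Q * M * P) =
      (C : R →+* R[X]).mapMatrix Q * charmatrix M * (C : R →+* R[X]).mapMatrix P := by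
    rw [charmatrix, charmatrix, Matrix.mul_sub, Matrix.sub_mul]
    congr 1
    · rw [← (Matrix.scalar_commute (X : R[X]) (fun r' => Commute.all _ _)
        ((C : R →+* R[X]).mapMatrix Q)).eq, Matrix.mul_assoc, hQP, Matrix.mul_one]
    · rw [← _root_.map_mul (C : R →+* R[X]).mapMatrix, ← _root_.map_mul (C : R →+* R[X]).mapMatrix]
  rw [Matrix.charpoly, Matrix.charpoly, key, Matrix.det_mul, Matrix.det_mul]
  have h3 : ((C : R →+* R[X]).mapMatrix Q).det * ((C : R →+* R[X]).mapMatrix P).det = 1 := by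
    rw [← Matrix.det_mul, hQP, Matrix.det_one]
  calc ((C : R →+* R[X]).mapMatrix Q).det * (charmatrix M).det * ((C : R →+* R[X]).mapMatrix P).det
      = ((C : R →+* R[X]).mapMatrix Q).det * ((C : R →+* R[X]).mapMatrix P).det
        * (charmatrix M).det := by ring
    _ = (charmatrix M).det := by rw [h3, one_mul]

variable {N : ℕ}

noncomputable def uu (r : Fin N) : Fin N → ℝ := fun i => if i = r then 0 else 1

noncomputable def AA (r : Fin N) : Matrix (Fin N) (Fin N) ℝ :=
  Matrix.of fun i k => uu r i * (if k = r then 1 else 0)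

lemma AA_sq (r : Fin N) : AA r * AA r = 0 := by
  ext i j
  rw [Matrix.mul_apply]
  rw [show (0 : Matrix (Fin N) (Fin N) ℝ) i j = 0 from rfl]
  refine Finset.sum_eq_zero fun k _ => ?_
  by_cases hk : k = r
  · subst hk; simp [AA, uu]
  · simp [AA, hk]

lemma PQ_one (r : Fin N) : (1 + AA r) * (1 - AA r) = 1 := by
  have h : (1 + AA r) * (1 - AA r) = 1 - AA r * AA r := by noncomm_ring
  rw [h, AA_sq, sub_zero]

noncomputable def LL (L : Matrix (Fin N) (Fin N) ℝ) (r : Fin N) : Matrix (Fin N) (Fin N) ℝ :=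
  (1 - AA r) * L * (1 + AA r)

lemma LL_charpoly (L : Matrix (Fin N) (Fin N) ℝ) (r : Fin N) :
    (LL L r).charpoly = L.charpoly :=
  my_charpoly_conj L (1 + AA r) (1 - AA r) (PQ_one r)

lemma LP_apply (L : Matrix (Fin N) (Fin N) ℝ) (r : Fin N)
    (hrow : ∀ i, ∑ j, L i j = 0) (i j : Fin N) :
    (L * (1 + AA r)) i j = if j = r then 0 else L i j := by
  have step : (L * (1 + AA r)) i j
      = (∑ k, if k = j then L i k else 0)
        + ∑ k, (if j = r then L i k * uu r k else 0) := by
    rw [Matrix.mul_apply, ← Finset.sum_add_distrib]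
    refine Finset.sum_congr rfl fun k _ => ?_
    simp only [Matrix.add_apply, Matrix.one_apply, AA, Matrix.of_apply]
    split_ifs <;> ring
  rw [step, Finset.sum_ite_eq' Finset.univ j (L i), if_pos (Finset.mem_univ j)]
  by_cases hj : j = r
  · have hsum : ∑ k, L i k * uu r k = - L i r := by
      have hk : ∀ k, L i k * uu r k = L i k - (if k = r then L i k else 0) := by
        intro k; simp only [uu]; split_ifs <;> ring
      rw [Finset.sum_congr rfl fun k _ => hk k, Finset.sum_sub_distrib,
        Finset.sum_ite_eq' Finset.univ r (L i), if_pos (Finset.mem_univ r), hrow i]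
      ring
    simp only [hj, if_true]
    rw [hsum]; ring
  · simp [hj]

lemma LL_apply (L : Matrix (Fin N) (Fin N) ℝ) (r : Fin N)
    (hrow : ∀ i, ∑ j, L i j = 0) (i j : Fin N) :
    LL L r i j = if j = r then 0 else L i j - uu r i * L r j := by
  have step : LL L r i j
      = (∑ k, if i = k then (L * (1 + AA r)) k j else 0)
        - ∑ k, (if k = r then uu r i * (L * (1 + AA r)) k j else 0) := by
    rw [LL, Matrix.mul_assoc, Matrix.mul_apply, ← Finset.sum_sub_distrib]
    refine Finset.sum_congr rfl fun k _ => ?_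
    simp only [Matrix.sub_apply, Matrix.one_apply, AA, Matrix.of_apply]
    split_ifs <;> ring
  rw [step, Finset.sum_ite_eq Finset.univ i, if_pos (Finset.mem_univ i),
    Finset.sum_ite_eq' Finset.univ r, if_pos (Finset.mem_univ r),
    LP_apply L r hrow, LP_apply L r hrow]
  by_cases hj : j = r
  · simp [hj, uu]
  · simp [hj]

variable {N : ℕ}

lemma lap_mulVec (a : Fin N → Fin N → ℝ) (L : Matrix (Fin N) (Fin N) ℝ)
    (hLdiag : ∀ i, L i i = ∑ j ∈ Finset.univ.erase i, a i j)
    (hLoff : ∀ i j, i ≠ j → L i j = -(a i j))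
    (y : Fin N → ℝ) (i : Fin N) :
    (L *ᵥ y) i = ∑ j ∈ Finset.univ.erase i, a i j * (y i - y j) := by
  have h1 : (L *ᵥ y) i = ∑ j, L i j * y j := rfl
  rw [h1, ← Finset.add_sum_erase _ _ (Finset.mem_univ i), hLdiag i, Finset.sum_mul,
    ← Finset.sum_add_distrib]
  refine Finset.sum_congr rfl fun j hj => ?_
  rw [hLoff i j (Ne.symm (Finset.ne_of_mem_erase hj))]
  ring

lemma reach_mem_of_closed (a : Fin N → Fin N → ℝ) (S : Set (Fin N))
    (hS : ∀ i ∈ S, ∀ j, 0 < a i j → j ∈ S) {u v : Fin N}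
    (h : Relation.ReflTransGen (fun p q : Fin N => 0 < a q p) u v) (hv : v ∈ S) : u ∈ S := by
  induction h using Relation.ReflTransGen.head_induction_on with
  | refl => exact hv
  | head h' _ ih => exact hS _ ih _ h'

/-- maximum principle: if `L *ᵥ y` is constant and there is a root reaching all
nodes, then `y` is constant. -/
lemma lap_maxprin (hN : 1 ≤ N) (a : Fin N → Fin N → ℝ)
    (ha : ∀ i j, i ≠ j → 0 ≤ a i j)
    (L : Matrix (Fin N) (Fin N) ℝ)
    (hLdiag : ∀ i, L i i = ∑ j ∈ Finset.univ.erase i, a i j)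
    (hLoff : ∀ i j, i ≠ j → L i j = -(a i j))
    (r : Fin N) (hr : ∀ i, Relation.ReflTransGen (fun u v : Fin N => 0 < a v u) r i)
    (y : Fin N → ℝ) (c : ℝ) (hc : ∀ i, (L *ᵥ y) i = c) (i : Fin N) : y i = y r := by
  have hne : (Finset.univ : Finset (Fin N)).Nonempty := ⟨r, Finset.mem_univ r⟩
  obtain ⟨imax, -, hmax⟩ := Finset.exists_max_image Finset.univ y hne
  obtain ⟨imin, -, hmin⟩ := Finset.exists_min_image Finset.univ y hne
  have hmax' : ∀ j, y j ≤ y imax := fun j => hmax j (Finset.mem_univ j)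
  have hmin' : ∀ j, y imin ≤ y j := fun j => hmin j (Finset.mem_univ j)
  -- c = 0
  have hc0 : c = 0 := by
    have h1 : 0 ≤ c := by
      rw [← hc imax, lap_mulVec a L hLdiag hLoff]
      exact Finset.sum_nonneg fun j hj => mul_nonneg
        (ha _ _ (Ne.symm (Finset.ne_of_mem_erase hj))) (by linarith [hmax' j])
    have h2 : c ≤ 0 := by
      rw [← hc imin, lap_mulVec a L hLdiag hLoff]
      exact Finset.sum_nonpos fun j hj => mul_nonpos_of_nonneg_of_nonpos
        (ha _ _ (Ne.symm (Finset.ne_of_mem_erase hj))) (by linarith [hmin' j])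
    linarith
  -- the max set is pred-closed
  have hSmax : ∀ i ∈ {i | y i = y imax}, ∀ j, 0 < a i j → j ∈ {i | y i = y imax} := by
    intro i hi j hij
    by_cases hji : j = i
    · subst hji; exact hi
    have hzero : ∑ k ∈ Finset.univ.erase i, a i k * (y i - y k) = 0 := by
      rw [← lap_mulVec a L hLdiag hLoff, hc, hc0]
    have hterm := (Finset.sum_eq_zero_iff_of_nonneg (fun k hk => mul_nonneg
      (ha _ _ (Ne.symm (Finset.ne_of_mem_erase hk)))
      (by simp only [Set.mem_setOf_eq] at hi; linarith [hmax' k]))).mp hzero j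
      (Finset.mem_erase.mpr ⟨hji, Finset.mem_univ j⟩)
    have : y i - y j = 0 := by
      rcases mul_eq_zero.mp hterm with h | h
      · exact absurd h (ne_of_gt hij)
      · exact h
    simp only [Set.mem_setOf_eq] at hi ⊢
    linarith
  have hSmin : ∀ i ∈ {i | y i = y imin}, ∀ j, 0 < a i j → j ∈ {i | y i = y imin} := by
    intro i hi j hij
    by_cases hji : j = i
    · subst hji; exact hi
    have hzero : ∑ k ∈ Finset.univ.erase i, a i k * (y i - y k) = 0 := by
      rw [← lap_mulVec a L hLdiag hLoff, hc, hc0]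
    have hterm := (Finset.sum_eq_zero_iff_of_nonpos (fun k hk => mul_nonpos_of_nonneg_of_nonpos
      (ha _ _ (Ne.symm (Finset.ne_of_mem_erase hk)))
      (by simp only [Set.mem_setOf_eq] at hi; linarith [hmin' k]))).mp hzero j
      (Finset.mem_erase.mpr ⟨hji, Finset.mem_univ j⟩)
    have : y i - y j = 0 := by
      rcases mul_eq_zero.mp hterm with h | h
      · exact absurd h (ne_of_gt hij)
      · exact h
    simp only [Set.mem_setOf_eq] at hi ⊢
    linarith
  have hrmax : y r = y imax :=
    reach_mem_of_closed a _ hSmax (hr imax) (by simp [Set.mem_setOf_eq])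
  have hrmin : y r = y imin :=
    reach_mem_of_closed a _ hSmin (hr imin) (by simp [Set.mem_setOf_eq])
  have := hmax' i; have := hmin' i
  linarith


lemma uu_def (r i : Fin N) : uu r i = if i = r then 0 else 1 := rfl

lemma my_charpoly_eval_zero {n : Type*} [Fintype n] [DecidableEq n]
    (M : Matrix n n ℝ) : M.charpoly.eval 0 = (-1)^(Fintype.card n) * M.det := by
  rw [Matrix.charpoly, ← coe_evalRingHom, RingHom.map_det]
  have h : (charmatrix M).map (evalRingHom 0) = -M := by
    ext i j
    by_cases h : i = j
    · subst h; simp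
    · simp [charmatrix_apply_ne _ _ _ h]
  rw [RingHom.mapMatrix_apply, h, Matrix.det_neg]

lemma my_X_dvd_charpoly {n : Type*} [Fintype n] [DecidableEq n]
    (M : Matrix n n ℝ) (h : M.det = 0) : X ∣ M.charpoly := by
  rw [Polynomial.X_dvd_iff, Polynomial.coeff_zero_eq_eval_zero, my_charpoly_eval_zero, h, mul_zero]

lemma lap_rowsum (a : Fin N → Fin N → ℝ) (L : Matrix (Fin N) (Fin N) ℝ)
    (hLdiag : ∀ i, L i i = ∑ j ∈ Finset.univ.erase i, a i j)
    (hLoff : ∀ i j, i ≠ j → L i j = -(a i j)) (i : Fin N) :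
    ∑ j, L i j = 0 := by
  have h := lap_mulVec a L hLdiag hLoff (fun _ => 1) i
  simp only [Matrix.mulVec, dotProduct, mul_one, sub_self, mul_zero,
    Finset.sum_const_zero] at h
  exact h

lemma my_BT_charpoly {R : Type*} [CommRing R] {n : Type*} [Fintype n] [DecidableEq n]
    {α : Type*} [DecidableEq α] [LinearOrder α] {M : Matrix n n R} {b : n → α}
    (h : M.BlockTriangular b) :
    M.charpoly = ∏ k ∈ Finset.image b Finset.univ, (M.toSquareBlock b k).charpoly := by
  simp only [Matrix.charpoly, h.charmatrix.det, charmatrix_toSquareBlock]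

lemma tree_dir (hN : 1 ≤ N) (a : Fin N → Fin N → ℝ)
    (ha : ∀ i j, i ≠ j → 0 ≤ a i j)
    (L : Matrix (Fin N) (Fin N) ℝ)
    (hLdiag : ∀ i, L i i = ∑ j ∈ Finset.univ.erase i, a i j)
    (hLoff : ∀ i j, i ≠ j → L i j = -(a i j))
    (r : Fin N) (hr : ∀ i, Relation.ReflTransGen (fun u v : Fin N => 0 < a v u) r i) :
    Polynomial.rootMultiplicity (0 : ℝ) L.charpoly = 1 := by
  classical
  have hrow : ∀ i, ∑ j, L i j = 0 := lap_rowsum a L hLdiag hLoff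
  set b : Fin N → Fin 2 := fun i => if i = r then 0 else 1 with hb
  have hbr : b r = 0 := by simp [hb]
  have hLLapp := LL_apply L r hrow
  have hBT : (LL L r).BlockTriangular b := by
    intro i j hlt
    have hj : j = r := by
      by_contra hjr
      have h1 : (b j : ℕ) = 1 := by simp [hb, hjr]
      rw [Fin.lt_def] at hlt
      have h2 := (b i).isLt
      omega
    rw [hLLapp, if_pos hj]
  have hfact : L.charpoly = ∏ k ∈ Finset.image b Finset.univ,
      ((LL L r).toSquareBlock b k).charpoly := by
    rw [← LL_charpoly L r]; exact my_BT_charpoly hBT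
  have h0mem : (0 : Fin 2) ∈ Finset.image b Finset.univ :=
    Finset.mem_image.mpr ⟨r, Finset.mem_univ r, hbr⟩
  set q : Polynomial ℝ := ∏ k ∈ (Finset.image b Finset.univ).erase 0,
      ((LL L r).toSquareBlock b k).charpoly with hqdef
  have hfact2 : L.charpoly = ((LL L r).toSquareBlock b 0).charpoly * q := by
    rw [hfact, ← Finset.mul_prod_erase _ _ h0mem]
  have huniq : ∀ x : {i // b i = 0}, (x : Fin N) = r := by
    rintro ⟨x, hx⟩
    by_contra hxr
    simp [hb, hxr] at hx
  haveI hu : Unique {i // b i = 0} :=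
    ⟨⟨⟨r, hbr⟩⟩, fun x => Subtype.ext (huniq x)⟩
  have hLLrr : LL L r r r = 0 := by rw [hLLapp, if_pos rfl]
  have hblk0 : ((LL L r).toSquareBlock b 0).charpoly = X := by
    rw [Matrix.charpoly, Matrix.det_unique]
    have hdd : ((LL L r).toSquareBlock b 0) default default = 0 := by
      simp only [Matrix.toSquareBlock_def, Matrix.of_apply, huniq]
      exact hLLrr
    rw [charmatrix_apply_eq, hdd, Polynomial.C_0, sub_zero]
  have hq0 : q.eval 0 ≠ 0 := by
    rw [hqdef, Polynomial.eval_prod]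
    rw [Finset.prod_ne_zero_iff]
    intro k hk
    have hk1 : k = 1 := by
      have h1 := (Finset.mem_erase.mp hk).1
      have h2 : (k : ℕ) ≠ 0 := fun h => h1 (Fin.ext (h.trans rfl))
      have h3 := k.isLt
      exact Fin.ext (by omega)
    subst hk1
    rw [my_charpoly_eval_zero]
    apply mul_ne_zero (pow_ne_zero _ (neg_ne_zero.mpr one_ne_zero))
    intro hdet
    obtain ⟨v, hvne, hv⟩ := Matrix.exists_mulVec_eq_zero_iff.mpr hdet
    set y : Fin N → ℝ := fun i => if h : b i = 1 then v ⟨i, h⟩ else 0 with hy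
    have hyr : y r = 0 := by
      rw [hy]
      exact dif_neg (by rw [hbr]; exact fun h => absurd h (by decide))
    have hLy : ∀ i, (L *ᵥ y) i = (L *ᵥ y) r := by
      intro i
      by_cases hir : i = r
      · rw [hir]
      have hbi : b i = 1 := by simp [hb, hir]
      have h2 : ∑ j : {x // b x = 1}, LL L r i (j : Fin N) * v j = 0 := by
        have h2' := congrFun hv ⟨i, hbi⟩
        simpa [Matrix.mulVec, dotProduct, Matrix.toSquareBlock_def] using h2'
      have h3 : ∑ j : Fin N, LL L r i j * y j = 0 := by
        rw [← h2]
        rw [← Finset.sum_filter_add_sum_filter_not Finset.univ (fun x => b x = 1)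
          (fun j => LL L r i j * y j)]
        have hz : ∑ j ∈ Finset.univ.filter (fun x => ¬ b x = 1), LL L r i j * y j = 0 :=
          Finset.sum_eq_zero fun j hj => by
            show LL L r i j * y j = 0
            have hyj : y j = 0 := dif_neg (Finset.mem_filter.mp hj).2
            rw [hyj, mul_zero]
        rw [hz, add_zero]
        rw [Finset.sum_subtype (p := fun x => b x = 1)
          (Finset.univ.filter fun x => b x = 1) (fun x => by simp)
          (fun j => LL L r i j * y j)]
        refine Finset.sum_congr rfl fun j _ => ?_
        show LL L r i ↑j * y ↑j = LL L r i ↑j * v j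
        congr 1
        exact dif_pos j.2
      have h4 : (L *ᵥ y) i - (L *ᵥ y) r = 0 := by
        have e : ∀ j, LL L r i j * y j = (L i j - L r j) * y j := by
          intro j
          by_cases hjr : j = r
          · rw [hjr, hyr, mul_zero, mul_zero]
          · rw [hLLapp, if_neg hjr, uu_def, if_neg hir, one_mul]
        calc (L *ᵥ y) i - (L *ᵥ y) r = ∑ j, (L i j - L r j) * y j := by
              show (∑ j, L i j * y j) - (∑ j, L r j * y j) = _
              rw [← Finset.sum_sub_distrib]
              refine Finset.sum_congr rfl fun j _ => by ring
          _ = ∑ j, LL L r i j * y j := Finset.sum_congr rfl fun j _ => (e j).symm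
          _ = 0 := h3
      linarith
    have hconst := lap_maxprin hN a ha L hLdiag hLoff r hr y ((L *ᵥ y) r) hLy
    apply hvne
    funext j
    have h5 := hconst ↑j
    rw [hyr] at h5
    have h6 : y ↑j = v j := dif_pos j.2
    show v j = 0
    rw [← h6, h5]
  have hqne : q ≠ 0 := fun h => hq0 (by rw [h, Polynomial.eval_zero])
  rw [hfact2, hblk0]
  rw [Polynomial.rootMultiplicity_mul (mul_ne_zero Polynomial.X_ne_zero hqne)]
  have h1 : Polynomial.rootMultiplicity (0:ℝ) X = 1 := by
    rw [show (X : Polynomial ℝ) = X - Polynomial.C 0 by rw [Polynomial.C_0, sub_zero]]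
    exact Polynomial.rootMultiplicity_X_sub_C_self
  have h2 : Polynomial.rootMultiplicity (0:ℝ) q = 0 :=
    Polynomial.rootMultiplicity_eq_zero hq0
  rw [h1, h2]

lemma block_det_zero (a : Fin N → Fin N → ℝ)
    (ha : ∀ i j, i ≠ j → 0 ≤ a i j)
    (L : Matrix (Fin N) (Fin N) ℝ)
    (hLoff : ∀ i j, i ≠ j → L i j = -(a i j))
    (hrow : ∀ i, ∑ j, L i j = 0)
    (p : Fin N → Prop) [DecidablePred p] (hne : ∃ x, p x)
    (hcl : ∀ i, p i → ∀ j, 0 < a i j → p j)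
    (M1 : Matrix {x // p x} {x // p x} ℝ) (hM1 : ∀ i j, M1 i j = L ↑i ↑j) :
    M1.det = 0 := by
  refine Matrix.exists_mulVec_eq_zero_iff.mp ⟨fun _ => 1, ?_, ?_⟩
  · obtain ⟨x, hx⟩ := hne
    intro hzero
    have h1 := congrFun hzero ⟨x, hx⟩
    simpa using h1
  · funext i
    show ∑ j : {x // p x}, M1 i j * 1 = 0
    have e1 : ∀ j : {x // p x}, M1 i j * 1 = L ↑i ↑j := by
      intro j; rw [hM1, mul_one]
    rw [Finset.sum_congr rfl fun j _ => e1 j]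
    rw [← Finset.sum_subtype (p := p) (Finset.univ.filter p) (fun x => by simp)
      (fun j => L ↑i j)]
    rw [Finset.sum_subset (Finset.filter_subset p Finset.univ)]
    · exact hrow ↑i
    · intro j _ hj
      rw [Finset.mem_filter] at hj
      push_neg at hj
      have hpj : ¬ p j := hj (Finset.mem_univ j)
      have hij : (↑i : Fin N) ≠ j := fun h => hpj (h ▸ i.2)
      rw [hLoff _ _ hij, neg_eq_zero]
      refine le_antisymm ?_ (ha _ _ hij)
      by_contra hgt
      push_neg at hgt
      exact hpj (hcl ↑i i.2 j hgt)

lemma notree_dir (hN : 1 ≤ N) (a : Fin N → Fin N → ℝ)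
    (ha : ∀ i j, i ≠ j → 0 ≤ a i j)
    (L : Matrix (Fin N) (Fin N) ℝ)
    (hLdiag : ∀ i, L i i = ∑ j ∈ Finset.univ.erase i, a i j)
    (hLoff : ∀ i j, i ≠ j → L i j = -(a i j))
    (h : ¬ ∃ r : Fin N, ∀ i, Relation.ReflTransGen (fun u v : Fin N => 0 < a v u) r i) :
    2 ≤ Polynomial.rootMultiplicity (0 : ℝ) L.charpoly := by
  classical
  push_neg at h
  have hrow : ∀ i, ∑ j, L i j = 0 := lap_rowsum a L hLdiag hLoff
  set Rch : Fin N → Finset (Fin N) := fun i =>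
    Finset.univ.filter (fun u => Relation.ReflTransGen (fun p q : Fin N => 0 < a q p) u i)
    with hRdef
  have hmem : ∀ i u, u ∈ Rch i ↔
      Relation.ReflTransGen (fun p q : Fin N => 0 < a q p) u i := by
    intro i u; simp [hRdef]
  have hself : ∀ i, i ∈ Rch i := fun i => (hmem i i).mpr Relation.ReflTransGen.refl
  have hcl : ∀ x i, i ∈ Rch x → ∀ j, 0 < a i j → j ∈ Rch x := by
    intro x i hi j hj
    rw [hmem] at hi ⊢
    exact Relation.ReflTransGen.head hj hi
  obtain ⟨i0, -, hmin⟩ := Finset.exists_min_image Finset.univ (fun i => (Rch i).card)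
    ⟨⟨0, hN⟩, Finset.mem_univ _⟩
  have hkey : ∀ u ∈ Rch i0, Rch u = Rch i0 := by
    intro u hu
    refine Finset.eq_of_subset_of_card_le ?_ (hmin u (Finset.mem_univ u))
    intro v hv
    rw [hmem] at hv hu ⊢
    exact hv.trans hu
  obtain ⟨w, hw⟩ := h i0
  have hdisj : ∀ v, v ∈ Rch w → v ∉ Rch i0 := by
    intro v hvw hvi
    apply hw
    have h1 : i0 ∈ Rch v := (hkey v hvi).symm ▸ hself i0
    rw [hmem] at h1 hvw
    exact h1.trans hvw
  set b : Fin N → Fin 3 := fun i => if i ∈ Rch i0 then 2 else if i ∈ Rch w then 1 else 0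
    with hb
  have hb2 : ∀ x, b x = 2 ↔ x ∈ Rch i0 := by
    intro x
    constructor
    · intro hx
      by_contra hxn
      by_cases hx1 : x ∈ Rch w
      · simp [hb, hxn, hx1] at hx
      · simp [hb, hxn, hx1] at hx
    · intro hx; simp [hb, hx]
  have hb1 : ∀ x, b x = 1 ↔ x ∈ Rch w := by
    intro x
    constructor
    · intro hx
      by_contra hxn
      by_cases hx2 : x ∈ Rch i0
      · simp [hb, hx2] at hx
      · simp [hb, hx2, hxn] at hx
    · intro hx
      have hx2 : x ∉ Rch i0 := hdisj x hx
      simp [hb, hx2, hx]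
  have hBT : L.BlockTriangular b := by
    intro i j hlt
    have hij : i ≠ j := by rintro rfl; exact lt_irrefl _ hlt
    rw [hLoff i j hij, neg_eq_zero]
    by_contra hne
    have hpos : 0 < a i j := lt_of_le_of_ne (ha i j hij) (Ne.symm hne)
    by_cases hi2 : i ∈ Rch i0
    · have hj2 : j ∈ Rch i0 := hcl i0 i hi2 j hpos
      rw [(hb2 i).mpr hi2, (hb2 j).mpr hj2] at hlt
      exact lt_irrefl _ hlt
    by_cases hi1 : i ∈ Rch w
    · have hj1 : j ∈ Rch w := hcl w i hi1 j hpos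
      rw [(hb1 i).mpr hi1, (hb1 j).mpr hj1] at hlt
      exact lt_irrefl _ hlt
    · have hbi : b i = 0 := by simp [hb, hi2, hi1]
      rw [hbi] at hlt
      exact absurd hlt (Fin.not_lt_zero _)
  have hfact := my_BT_charpoly hBT
  have h2mem : (2 : Fin 3) ∈ Finset.image b Finset.univ :=
    Finset.mem_image.mpr ⟨i0, Finset.mem_univ i0, (hb2 i0).mpr (hself i0)⟩
  have h1mem : (1 : Fin 3) ∈ (Finset.image b Finset.univ).erase 2 :=
    Finset.mem_erase.mpr ⟨by decide,
      Finset.mem_image.mpr ⟨w, Finset.mem_univ w, (hb1 w).mpr (hself w)⟩⟩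
  have hd2 : (L.toSquareBlock b 2).det = 0 := by
    refine block_det_zero a ha L hLoff hrow (fun x => b x = 2)
      ⟨i0, (hb2 i0).mpr (hself i0)⟩ ?_ _ (fun i j => rfl)
    intro i hi j hj
    exact (hb2 j).mpr (hcl i0 i ((hb2 i).mp hi) j hj)
  have hd1 : (L.toSquareBlock b 1).det = 0 := by
    refine block_det_zero a ha L hLoff hrow (fun x => b x = 1)
      ⟨w, (hb1 w).mpr (hself w)⟩ ?_ _ (fun i j => rfl)
    intro i hi j hj
    exact (hb1 j).mpr (hcl w i ((hb1 i).mp hi) j hj)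
  have hX2 : (X : ℝ[X])^2 ∣ L.charpoly := by
    rw [hfact, ← Finset.mul_prod_erase _ _ h2mem, ← Finset.mul_prod_erase _ _ h1mem, pow_two]
    exact mul_dvd_mul (my_X_dvd_charpoly _ hd2)
      (dvd_mul_of_dvd_left (my_X_dvd_charpoly _ hd1) _)
  rw [Polynomial.le_rootMultiplicity_iff (Matrix.charpoly_monic L).ne_zero]
  rw [Polynomial.C_0, sub_zero]
  exact hX2

end LapAux

/-- `0` is a simple eigenvalue of the Laplacian (algebraic
multiplicity `1` as a root of the characteristic polynomial) iff the weighted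
digraph contains a directed spanning tree (with `a i j > 0` encoding a directed
edge from node `j` to node `i`). -/
theorem laplacian_zero_simple_iff_spanning_tree
    (N : ℕ) (hN : 1 ≤ N)
    (a : Fin N → Fin N → ℝ)
    (ha : ∀ i j, i ≠ j → 0 ≤ a i j)
    (L : Matrix (Fin N) (Fin N) ℝ)
    (hLdiag : ∀ i, L i i = ∑ j ∈ Finset.univ.erase i, a i j)
    (hLoff : ∀ i j, i ≠ j → L i j = -(a i j)) :
    Polynomial.rootMultiplicity (0 : ℝ) L.charpoly = 1 ↔
      ∃ r : Fin N, ∀ i : Fin N,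
        Relation.ReflTransGen (fun u v : Fin N => 0 < a v u) r i := by
  constructor
  · intro h1
    by_contra htree
    have h2 := notree_dir hN a ha L hLdiag hLoff htree
    omega
  · rintro ⟨r, hr⟩
    exact tree_dir hN a ha L hLdiag hLoff r hr
end

section
/- Let A ∈ ℝ^{N×N} be a nonsingular M-matrix, i.e., Aᵢⱼ ≤ 0 for all i ≠ j and every eigenvalue of A over ℂ has positive real part. Then there exists a diagonal matrix G = diag(g₁, …, g_N) with all gᵢ > 0 such that GA + AᵀG is symmetric positive definite. -/
/-!
A Z-matrix `A` with no eigenvalue in `(-∞, 0]` has an entrywise nonnegative inverse: for large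
`c` the inverse of `A + c` is a Neumann series with nonnegative terms, and nonnegativity propagates
down to `c = 0` by continuity, since `(M - ε)⁻¹ = (1 - ε M⁻¹)⁻¹ M⁻¹` stays nonnegative for small
`ε > 0`. Hence `u = A⁻¹ 𝟙` and `v = A⁻ᵀ 𝟙` are positive vectors with `A u > 0` and `Aᵀ v > 0`.
For `G = diag (v / u)` the symmetric Z-matrix `B = G A + Aᵀ G` satisfies `B u = G A u + Aᵀ v > 0`,
and such a matrix is positive definite: writing `y = x / u`, the Z-sign pattern and AM-GM give
`xᵀ B x ≥ ∑ᵢ yᵢ² uᵢ (B u)ᵢ`.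
-/

open Matrix Filter Set Topology

namespace Matrix

variable {n : Type*}

def IsZMatrix (A : Matrix n n ℝ) : Prop := ∀ i j, i ≠ j → A i j ≤ 0

theorem IsZMatrix.transpose {A : Matrix n n ℝ} (hA : A.IsZMatrix) : Aᵀ.IsZMatrix :=
  fun i j hij => hA j i hij.symm

variable [Fintype n]

theorem IsZMatrix.posDef_of_mulVec_pos {B : Matrix n n ℝ} (hB : B.IsZMatrix) (hsymm : B.IsSymm)
    {u : n → ℝ} (hu : ∀ i, 0 < u i) (hBu : ∀ i, 0 < (B *ᵥ u) i) : B.PosDef := by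
  refine posDef_iff_dotProduct_mulVec.2 ⟨isHermitian_iff_isSymm.2 hsymm, fun x hx => ?_⟩
  set w : n → ℝ := fun i => x i ^ 2 / u i
  have hterm : ∀ i j, (B i j * u j * w i + B j i * u i * w j) / 2 ≤ x i * (B i j * x j) := by
    intro i j
    rcases eq_or_ne i j with rfl | hij
    · have huw : B i i * u i * w i = x i * (B i i * x i) := by
        rw [mul_assoc, mul_div_cancel₀ _ (hu i).ne']; ring
      linarith
    · have hamgm : x i * x j ≤ (u j * w i + u i * w j) / 2 := by
        have hui := hu i
        have huj := hu j
        simp only [w]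
        field_simp
        nlinarith [sq_nonneg (x i * u j - x j * u i)]
      rw [hsymm.apply i j]
      nlinarith [hB i j hij]
  have hsum : ∑ i, ∑ j, B i j * u j * w i = w ⬝ᵥ (B *ᵥ u) := by
    simp only [dotProduct, mulVec, Finset.mul_sum]
    exact Finset.sum_congr rfl fun i _ => Finset.sum_congr rfl fun j _ => by ring
  have hpos : 0 < w ⬝ᵥ (B *ᵥ u) := by
    obtain ⟨i, hi⟩ := Function.ne_iff.1 hx
    refine Finset.sum_pos' (fun j _ => mul_nonneg ?_ (hBu j).le) ⟨i, Finset.mem_univ i, ?_⟩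
    · exact div_nonneg (sq_nonneg _) (hu j).le
    · exact mul_pos (div_pos (sq_pos_of_ne_zero hi) (hu i)) (hBu i)
  calc 0 < w ⬝ᵥ (B *ᵥ u) := hpos
    _ = ∑ i, ∑ j, (B i j * u j * w i + B j i * u i * w j) / 2 := by
      simp only [add_div, Finset.sum_add_distrib]
      rw [Finset.sum_comm (f := fun i j => B j i * u i * w j / 2)]
      simp only [← Finset.sum_div, hsum]; ring
    _ ≤ star x ⬝ᵥ (B *ᵥ x) := by
      simp only [star_trivial, dotProduct, mulVec, Finset.mul_sum]
      exact Finset.sum_le_sum fun i _ => Finset.sum_le_sum fun j _ => hterm i j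

variable [DecidableEq n]

section LinftyOpNorm

attribute [local instance] Matrix.linftyOpNormedAddCommGroup Matrix.linftyOpNormedRing
  Matrix.linftyOpNormedAlgebra

theorem eventually_inv_one_sub_smul_nonneg {C : Matrix n n ℝ} (hC : ∀ i j, 0 ≤ C i j) :
    ∀ᶠ ε in 𝓝[>] (0 : ℝ), IsUnit (1 - ε • C).det ∧ ∀ i j, 0 ≤ (1 - ε • C)⁻¹ i j := by
  have hsmall : ∀ᶠ ε in 𝓝 (0 : ℝ), ‖ε • C‖ < 1 :=
    (continuous_id.smul continuous_const).norm.continuousAt.eventually_lt continuousAt_const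
      (by simp)
  filter_upwards [nhdsWithin_le_nhds hsmall, self_mem_nhdsWithin] with ε hε (hε0 : 0 < ε)
  refine ⟨(isUnit_iff_isUnit_det _).1 (Units.oneSub _ hε).isUnit, fun i j => ?_⟩
  have hsum := hasSum_geom_series_inverse _ hε
  rw [← nonsing_inv_eq_ringInverse] at hsum
  exact (Pi.hasSum.1 (Pi.hasSum.1 hsum i) j).nonneg
    (pow_apply_nonneg (fun i j => mul_nonneg hε0.le (hC i j)) · i j)

end LinftyOpNorm

theorem eventually_inv_sub_smul_one_nonneg {M : Matrix n n ℝ} (hM : IsUnit M.det)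
    (hinv : ∀ i j, 0 ≤ M⁻¹ i j) :
    ∀ᶠ ε in 𝓝[>] (0 : ℝ), ∀ i j, 0 ≤ (M - ε • 1)⁻¹ i j := by
  filter_upwards [eventually_inv_one_sub_smul_nonneg hinv] with ε hε i j
  have hfac : M - ε • 1 = M * (1 - ε • M⁻¹) := by
    rw [mul_sub, mul_one, Matrix.mul_smul, mul_nonsing_inv _ hM]
  rw [hfac, mul_inv_rev, mul_apply]
  exact Finset.sum_nonneg fun k _ => mul_nonneg (hε.2 i k) (hinv k j)

theorem IsZMatrix.eventually_inv_add_smul_one_nonneg {A : Matrix n n ℝ} (hA : A.IsZMatrix) :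
    ∀ᶠ c : ℝ in atTop, ∀ i j, 0 ≤ (A + c • 1)⁻¹ i j := by
  set s := ∑ i, |A i i|
  set P := s • 1 - A
  have hP : ∀ i j, 0 ≤ P i j := by
    intro i j
    rcases eq_or_ne i j with rfl | hij
    · have : A i i ≤ s := (le_abs_self _).trans
        (Finset.single_le_sum (fun k _ => abs_nonneg (A k k)) (Finset.mem_univ i))
      simpa [P] using this
    · simpa [P, one_apply_ne hij] using hA i j hij
  have hr : Tendsto (fun c => (s + c)⁻¹) atTop (𝓝[>] 0) :=
    tendsto_inv_atTop_nhdsGT_zero.comp (tendsto_atTop_add_const_left _ s tendsto_id)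
  filter_upwards [hr.eventually (eventually_inv_one_sub_smul_nonneg hP),
    eventually_gt_atTop (-s)] with c ⟨hunit, hinv⟩ hc i j
  have hr0 : s + c ≠ 0 := by linarith
  have hfac : A + c • 1 = (s + c) • (1 - (s + c)⁻¹ • P) := by
    rw [smul_sub, smul_smul, mul_inv_cancel₀ hr0, one_smul, add_smul]
    simp only [P]; abel
  have := invertibleOfNonzero hr0
  rw [hfac, inv_smul _ _ hunit, invOf_eq_inv]
  exact mul_nonneg (inv_nonneg.2 (by linarith)) (hinv i j)

theorem IsZMatrix.inv_nonneg {A : Matrix n n ℝ} (hA : A.IsZMatrix)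
    (hdet : ∀ t : ℝ, 0 ≤ t → (A + t • 1).det ≠ 0) (i j : n) : 0 ≤ A⁻¹ i j := by
  obtain ⟨c, hc, hc0⟩ := (hA.eventually_inv_add_smul_one_nonneg.and (eventually_ge_atTop 0)).exists
  have hK : IsClosed {M : Matrix n n ℝ | ∀ i j, 0 ≤ M i j} := by
    simp only [ofPred_forall]
    exact isClosed_iInter fun i => isClosed_iInter fun j =>
      isClosed_le continuous_const (continuous_id.matrix_elem i j)
  set s := (fun t : ℝ => (A + t • 1)⁻¹) ⁻¹' {M | ∀ i j, 0 ≤ M i j}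
  have hclosed : IsClosed (s ∩ Icc 0 c) := by
    have hcont : ContinuousOn (fun t : ℝ => (A + t • 1)⁻¹) (Icc 0 c) := fun t ht =>
      ((continuousAt_matrix_inv _
        (NormedRing.inverse_continuousAt (Units.mk0 _ (hdet t ht.1)))).comp
          (f := fun t : ℝ => A + t • 1) (by fun_prop)).continuousWithinAt
    rw [inter_comm]
    exact hcont.preimage_isClosed_of_isClosed isClosed_Icc hK
  have h0 : (0 : ℝ) ∈ s := hclosed.mem_of_ge_of_forall_exists_lt hc hc0
    fun t (⟨ht, ht0, _⟩ : t ∈ s ∩ Ioc 0 c) => by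
      obtain ⟨ε, hε, hεt⟩ := ((eventually_inv_sub_smul_one_nonneg
        (isUnit_iff_ne_zero.2 (hdet t ht0.le)) ht).and (Ioo_mem_nhdsGT ht0)).exists
      refine ⟨t - ε, ?_, by linarith [hεt.1], by linarith [hεt.1]⟩
      show ∀ i j, 0 ≤ (A + (t - ε) • 1)⁻¹ i j
      rwa [sub_smul, ← add_sub_assoc]
  simpa [s] using h0 i j

theorem IsZMatrix.exists_pos_mulVec_pos {A : Matrix n n ℝ} (hA : A.IsZMatrix)
    (hdet : ∀ t : ℝ, 0 ≤ t → (A + t • 1).det ≠ 0) :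
    ∃ u : n → ℝ, (∀ i, 0 < u i) ∧ ∀ i, 0 < (A *ᵥ u) i := by
  have hunit : IsUnit A.det := isUnit_iff_ne_zero.2 (by simpa using hdet 0 le_rfl)
  have hinv := hA.inv_nonneg hdet
  refine ⟨A⁻¹ *ᵥ 1, fun i => ?_, fun i => ?_⟩
  · refine (Finset.sum_nonneg fun j _ => by simpa using hinv i j).lt_of_ne fun hzero => ?_
    have hrow : ∀ j, A⁻¹ i j = 0 := by
      simpa [mulVec, dotProduct, Finset.sum_eq_zero_iff_of_nonneg, hinv i] using hzero.symm
    simpa [hrow, mul_apply] using congr_fun₂ (nonsing_inv_mul A hunit) i i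
  · simp [mulVec_mulVec, mul_nonsing_inv A hunit]

theorem det_add_smul_one_ne_zero_of_not_isRoot {A : Matrix n n ℝ} {t : ℝ}
    (h : ¬A.charpoly.IsRoot (-t)) : (A + t • 1).det ≠ 0 := by
  have hneg : scalar n (-t) - A = -(A + t • 1) := by
    rw [neg_add, scalar_apply, ← smul_one_eq_diagonal, neg_smul]; abel
  rw [Polynomial.IsRoot.def, eval_charpoly, hneg, det_neg] at h
  exact fun h0 => h (by rw [h0, mul_zero])

end Matrix

/-- For a nonsingular M-matrix `A` (nonpositive off-diagonal
entries, all complex eigenvalues with positive real part) there is a positive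
diagonal matrix `G` with `G*A + Aᵀ*G` symmetric positive definite. -/
theorem M_matrix_diagonal_lyapunov
    (N : ℕ) (A : Matrix (Fin N) (Fin N) ℝ)
    (hoff : ∀ i j, i ≠ j → A i j ≤ 0)
    (heig : ∀ μ : ℂ, (A.map Complex.ofReal).charpoly.IsRoot μ → 0 < μ.re) :
    ∃ g : Fin N → ℝ, (∀ i, 0 < g i) ∧
      (Matrix.diagonal g * A + Aᵀ * Matrix.diagonal g).PosDef := by
  have hroot : ∀ t : ℝ, 0 ≤ t → ¬A.charpoly.IsRoot (-t) := fun t ht h => by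
    have hC := h.map (f := Complex.ofRealHom)
    rw [← charpoly_map] at hC
    exact (heig _ hC).not_ge (by simpa using ht)
  obtain ⟨u, hu, hAu⟩ := IsZMatrix.exists_pos_mulVec_pos hoff
    fun t ht => det_add_smul_one_ne_zero_of_not_isRoot (hroot t ht)
  obtain ⟨v, hv, hAv⟩ := IsZMatrix.exists_pos_mulVec_pos (IsZMatrix.transpose hoff)
    fun t ht => det_add_smul_one_ne_zero_of_not_isRoot <| by
      rw [charpoly_transpose]; exact hroot t ht
  have hg : ∀ i, 0 < (v / u) i := fun i => div_pos (hv i) (hu i)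
  refine ⟨v / u, hg, IsZMatrix.posDef_of_mulVec_pos (fun i j hij => ?_) ?_ hu fun i => ?_⟩
  · simp only [Matrix.add_apply, diagonal_mul, mul_diagonal, transpose_apply]
    nlinarith [hoff i j hij, hoff j i hij.symm, hg i, hg j]
  · simpa [transpose_mul] using isSymm_add_transpose_self (diagonal (v / u) * A)
  · have hgu : diagonal (v / u) *ᵥ u = v := by
      ext k; simp [mulVec_diagonal, div_mul_cancel₀ _ (hu k).ne']
    rw [add_mulVec, ← mulVec_mulVec, ← mulVec_mulVec, hgu, Pi.add_apply, mulVec_diagonal]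
    exact add_pos (mul_pos (hg i) (hAu i)) (hAv i)
end

section
/- Let aᵢⱼ ≥ 0 (1 ≤ i ≠ j ≤ N) be weights such that the associated weighted digraph is strongly connected, and let L be the associated Laplacian matrix. Then there exists a vector r ∈ ℝ^N with all entries rᵢ > 0 such that rᵀL = 0; moreover, setting R = diag(r₁, …, r_N), the matrix L̂ := RL + LᵀR is symmetric, has L̂ᵢⱼ ≤ 0 for all i ≠ j, satisfies L̂·𝟏 = 0, is positive semidefinite, and its kernel equals the span of 𝟏 (i.e., L̂ is the Laplacian matrix of a connected undirected weighted graph). -/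
/-!
A Laplacian `L` has `L 𝟏 = 0`, so it is singular and has a nonzero left null vector
`v`. Because the off-diagonal entries of `L` are nonpositive, `(|v|ᵀ L)_j ≤ |(vᵀ L)_j| = 0` for
every `j`, while these entries sum to `|v|ᵀ L 𝟏 = 0`; hence `r = |v|` is again a left null vector.
A zero entry of a nonnegative left null vector forces zeros at all out-neighbours, so strong
connectivity makes `r` positive.

`L̂ = RL + LᵀR` is then symmetric with nonpositive off-diagonal entries and zero row sums, and
`2 xᵀ L̂ x = ∑ᵢⱼ (-L̂ᵢⱼ) (xᵢ - xⱼ)²`. This gives positive semidefiniteness, and a kernel vector is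
constant across every edge of `L̂`, whose graph contains that of `L`.
-/

open Matrix Finset

theorem Relation.ReflTransGen.imp_of_preserves {α : Type*} {r : α → α → Prop} {p : α → Prop}
    {a b : α} (hab : ReflTransGen r a b) (h : ∀ u v, r u v → p u → p v) : p a → p b := by
  induction hab with
  | refl => exact id
  | tail _ huv ih => exact h _ _ huv ∘ ih

namespace Matrix

variable {ι : Type*} {L M : Matrix ι ι ℝ}

/-- `L v u < 0` is read as an edge from `u` to `v`. -/
def IsStronglyConnected (L : Matrix ι ι ℝ) : Prop :=
  ∀ i j, Relation.ReflTransGen (fun u v => L v u < 0) i j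

theorem isStronglyConnected_of_weights {a : ι → ι → ℝ} (hoff : ∀ i j, i ≠ j → L i j = -a i j)
    (hsc : ∀ i j, Relation.ReflTransGen (fun u v => 0 < a v u) i j) : IsStronglyConnected L :=
  fun i j => (hsc i j).lift' id fun u v huv => by
    rcases eq_or_ne u v with rfl | hne
    · exact .refl
    · refine .single (show L v u < 0 from ?_)
      rw [hoff v u hne.symm, neg_neg_iff_pos]
      exact huv

variable [Fintype ι]

structure IsLaplacian (L : Matrix ι ι ℝ) : Prop where
  apply_nonpos_of_ne : ∀ ⦃i j⦄, i ≠ j → L i j ≤ 0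
  mulVec_one : L *ᵥ 1 = 0

theorem isLaplacian_of_weights [DecidableEq ι] {a : ι → ι → ℝ} (ha : ∀ i j, i ≠ j → 0 ≤ a i j)
    (hdiag : ∀ i, L i i = ∑ j ∈ univ.erase i, a i j)
    (hoff : ∀ i j, i ≠ j → L i j = -a i j) : IsLaplacian L where
  apply_nonpos_of_ne i j hij := by
    rw [hoff i j hij, neg_nonpos]
    exact ha i j hij
  mulVec_one := by
    funext i
    simp only [mulVec, dotProduct, Pi.one_apply, mul_one, Pi.zero_apply]
    rw [← add_sum_erase _ _ (mem_univ i), hdiag i, ← sum_add_distrib]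
    refine sum_eq_zero fun j hj => ?_
    rw [hoff i j (ne_of_mem_erase hj).symm, add_neg_cancel]

namespace IsLaplacian

theorem sum_vecMul_eq_zero (hL : IsLaplacian L) (w : ι → ℝ) : ∑ j, (w ᵥ* L) j = 0 := by
  rw [← dotProduct_one, ← dotProduct_mulVec, hL.mulVec_one, dotProduct_zero]

theorem vecMul_abs_apply_le (hL : IsLaplacian L) (v : ι → ℝ) (j : ι) :
    (|v| ᵥ* L) j ≤ |(v ᵥ* L) j| := by
  obtain ⟨σ, hσ, hσj⟩ : ∃ σ : ℝ, |σ| = 1 ∧ σ * v j = |v j| := by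
    rcases abs_choice (v j) with h | h
    · exact ⟨1, abs_one, by rw [h, one_mul]⟩
    · exact ⟨-1, by rw [abs_neg, abs_one], by rw [h, neg_one_mul]⟩
  have hσle : ∀ y, σ * y ≤ |y| := fun y =>
    (le_abs_self _).trans_eq (by rw [abs_mul, hσ, one_mul])
  calc (|v| ᵥ* L) j = ∑ i, |v i| * L i j := rfl
    _ ≤ ∑ i, σ * v i * L i j := sum_le_sum fun i _ => by
        rcases eq_or_ne i j with rfl | hij
        · rw [hσj]
        · exact mul_le_mul_of_nonpos_right (hσle _) (hL.apply_nonpos_of_ne hij)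
    _ = σ * (v ᵥ* L) j := by simp only [vecMul, dotProduct, mul_sum, mul_assoc]
    _ ≤ |(v ᵥ* L) j| := hσle _

theorem vecMul_abs_eq_zero (hL : IsLaplacian L) {v : ι → ℝ} (hv : v ᵥ* L = 0) :
    |v| ᵥ* L = 0 := by
  have hle : ∀ j ∈ univ, (|v| ᵥ* L) j ≤ 0 := fun j _ => by
    simpa [hv] using hL.vecMul_abs_apply_le v j
  funext j
  exact (sum_eq_zero_iff_of_nonpos hle).mp (hL.sum_vecMul_eq_zero |v|) j (mem_univ j)

theorem apply_eq_zero_of_vecMul_eq_zero (hL : IsLaplacian L) {s : ι → ℝ} (hs : 0 ≤ s)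
    (hsL : s ᵥ* L = 0) {j k : ι} (hj : s j = 0) (hkj : L k j < 0) : s k = 0 := by
  have hterm : ∀ i ∈ univ, s i * L i j ≤ 0 := fun i _ => by
    rcases eq_or_ne i j with rfl | hij
    · rw [hj, zero_mul]
    · exact mul_nonpos_of_nonneg_of_nonpos (hs i) (hL.apply_nonpos_of_ne hij)
  have hk := (sum_eq_zero_iff_of_nonpos hterm).mp (congrFun hsL j) k (mem_univ k)
  exact (mul_eq_zero.mp hk).resolve_right hkj.ne

theorem pos_of_vecMul_eq_zero (hL : IsLaplacian L) (hconn : IsStronglyConnected L)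
    {s : ι → ℝ} (hs : 0 ≤ s) (hs0 : s ≠ 0) (hsL : s ᵥ* L = 0) (i : ι) : 0 < s i :=
  (hs i).lt_of_ne' fun hi => hs0 <| funext fun k =>
    (hconn i k).imp_of_preserves
      (fun _ _ huv hu => hL.apply_eq_zero_of_vecMul_eq_zero hs hsL hu huv) hi

theorem det_eq_zero [DecidableEq ι] [Nonempty ι] (hL : IsLaplacian L) : L.det = 0 :=
  exists_mulVec_eq_zero_iff.mp ⟨1, one_ne_zero, hL.mulVec_one⟩

theorem exists_pos_vecMul_eq_zero [DecidableEq ι] (hL : IsLaplacian L)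
    (hconn : IsStronglyConnected L) : ∃ r : ι → ℝ, (∀ i, 0 < r i) ∧ r ᵥ* L = 0 := by
  rcases isEmpty_or_nonempty ι with hι | hι
  · exact ⟨0, isEmptyElim, Subsingleton.elim _ _⟩
  obtain ⟨v, hv0, hv⟩ := exists_vecMul_eq_zero_iff.mpr hL.det_eq_zero
  exact ⟨|v|, hL.pos_of_vecMul_eq_zero hconn (abs_nonneg v) (mt (Pi.abs_eq_zero v).mp hv0)
    (hL.vecMul_abs_eq_zero hv), hL.vecMul_abs_eq_zero hv⟩

end IsLaplacian

section Symmetrization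

variable [DecidableEq ι]

def symmetrizedLaplacian (r : ι → ℝ) (L : Matrix ι ι ℝ) : Matrix ι ι ℝ :=
  diagonal r * L + Lᵀ * diagonal r

theorem symmetrizedLaplacian_apply (r : ι → ℝ) (L : Matrix ι ι ℝ) (i j : ι) :
    symmetrizedLaplacian r L i j = r i * L i j + L j i * r j := by
  simp [symmetrizedLaplacian, diagonal_mul, mul_diagonal]

theorem isSymm_symmetrizedLaplacian (r : ι → ℝ) (L : Matrix ι ι ℝ) :
    (symmetrizedLaplacian r L).IsSymm :=
  IsSymm.ext fun i j => by
    rw [symmetrizedLaplacian_apply, symmetrizedLaplacian_apply]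
    ring

theorem IsLaplacian.symmetrizedLaplacian (hL : IsLaplacian L) {r : ι → ℝ} (hr : 0 ≤ r)
    (hrL : r ᵥ* L = 0) : IsLaplacian (symmetrizedLaplacian r L) where
  apply_nonpos_of_ne i j hij := by
    rw [symmetrizedLaplacian_apply]
    exact add_nonpos (mul_nonpos_of_nonneg_of_nonpos (hr i) (hL.apply_nonpos_of_ne hij))
      (mul_nonpos_of_nonpos_of_nonneg (hL.apply_nonpos_of_ne hij.symm) (hr j))
  mulVec_one := by
    have hr1 : diagonal r *ᵥ 1 = r := by
      funext i
      rw [mulVec_diagonal, Pi.one_apply, mul_one]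
    rw [Matrix.symmetrizedLaplacian, add_mulVec, ← mulVec_mulVec, hL.mulVec_one, mulVec_zero,
      zero_add, ← mulVec_mulVec, hr1, mulVec_transpose, hrL]

theorem IsLaplacian.symmetrizedLaplacian_apply_neg (hL : IsLaplacian L) {r : ι → ℝ} {i j : ι}
    (hri : 0 < r i) (hrj : 0 ≤ r j) (hij : L i j < 0) : Matrix.symmetrizedLaplacian r L i j < 0 := by
  have hji : L j i ≤ 0 := by
    rcases eq_or_ne j i with rfl | hne
    · exact hij.le
    · exact hL.apply_nonpos_of_ne hne
  rw [symmetrizedLaplacian_apply]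
  exact add_neg_of_neg_of_nonpos (mul_neg_of_pos_of_neg hri hij)
    (mul_nonpos_of_nonpos_of_nonneg hji hrj)

theorem IsStronglyConnected.symmetrizedLaplacian (hconn : IsStronglyConnected L)
    (hL : IsLaplacian L) {r : ι → ℝ} (hr : ∀ i, 0 < r i) :
    IsStronglyConnected (Matrix.symmetrizedLaplacian r L) := fun i j =>
  Relation.ReflTransGen.mono (fun _ _ h => hL.symmetrizedLaplacian_apply_neg (hr _) (hr _).le h)
    i j (hconn i j)

end Symmetrization

namespace IsLaplacian

theorem sum_sum_neg_mul_sq_sub (hM : IsLaplacian M) (hsymm : M.IsSymm) (x : ι → ℝ) :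
    ∑ i, ∑ j, -M i j * (x i - x j) ^ 2 = 2 * (x ⬝ᵥ M *ᵥ x) := by
  have hrow : ∀ i, ∑ j, M i j = 0 := fun i => by
    simpa [mulVec, dotProduct] using congrFun hM.mulVec_one i
  have hcol : ∀ j, ∑ i, M i j = 0 := fun j => by
    simpa only [hsymm.apply] using hrow j
  have hxi : ∑ i, ∑ j, M i j * x i ^ 2 = 0 := by
    simp only [← sum_mul, hrow, zero_mul, sum_const_zero]
  have hxj : ∑ i, ∑ j, M i j * x j ^ 2 = 0 := by
    rw [sum_comm]
    simp only [← sum_mul, hcol, zero_mul, sum_const_zero]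
  calc ∑ i, ∑ j, -M i j * (x i - x j) ^ 2
      = 2 * ∑ i, ∑ j, x i * (M i j * x j) - ∑ i, ∑ j, M i j * x i ^ 2
          - ∑ i, ∑ j, M i j * x j ^ 2 := by
        simp only [mul_sum, ← sum_sub_distrib]
        exact sum_congr rfl fun i _ => sum_congr rfl fun j _ => by ring
    _ = 2 * (x ⬝ᵥ M *ᵥ x) := by
        rw [hxi, hxj]
        simp [mulVec, dotProduct, mul_sum]

theorem neg_mul_sq_sub_nonneg (hM : IsLaplacian M) (x : ι → ℝ) (i j : ι) :
    0 ≤ -M i j * (x i - x j) ^ 2 := by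
  rcases eq_or_ne i j with rfl | hij
  · simp
  · exact mul_nonneg (neg_nonneg.mpr (hM.apply_nonpos_of_ne hij)) (sq_nonneg _)

theorem posSemidef (hM : IsLaplacian M) (hsymm : M.IsSymm) : M.PosSemidef := by
  refine .of_dotProduct_mulVec_nonneg (isHermitian_iff_isSymm.mpr hsymm) fun x => ?_
  have h := hM.sum_sum_neg_mul_sq_sub hsymm x
  have hnonneg : 0 ≤ ∑ i, ∑ j, -M i j * (x i - x j) ^ 2 :=
    sum_nonneg fun i _ => sum_nonneg fun j _ => hM.neg_mul_sq_sub_nonneg x i j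
  rw [star_trivial]
  linarith

theorem eq_of_mulVec_eq_zero (hM : IsLaplacian M) (hsymm : M.IsSymm) {x : ι → ℝ}
    (hx : M *ᵥ x = 0) {i j : ι} (hij : M i j < 0) : x i = x j := by
  have hsum : ∑ i, ∑ j, -M i j * (x i - x j) ^ 2 = 0 := by
    rw [hM.sum_sum_neg_mul_sq_sub hsymm, hx, dotProduct_zero, mul_zero]
  have hrow := (sum_eq_zero_iff_of_nonneg fun i _ =>
    sum_nonneg fun j _ => hM.neg_mul_sq_sub_nonneg x i j).mp hsum i (mem_univ i)
  have hterm := (sum_eq_zero_iff_of_nonneg fun j _ =>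
    hM.neg_mul_sq_sub_nonneg x i j).mp hrow j (mem_univ j)
  have hsq := (mul_eq_zero.mp hterm).resolve_left (neg_ne_zero.mpr hij.ne)
  exact sub_eq_zero.mp (pow_eq_zero_iff two_ne_zero |>.mp hsq)

theorem mulVec_eq_zero_iff (hM : IsLaplacian M) (hsymm : M.IsSymm)
    (hconn : IsStronglyConnected M) (x : ι → ℝ) : M *ᵥ x = 0 ↔ ∃ c : ℝ, x = fun _ => c := by
  constructor
  · intro hx
    rcases isEmpty_or_nonempty ι with hι | ⟨⟨i₀⟩⟩
    · exact ⟨0, Subsingleton.elim _ _⟩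
    refine ⟨x i₀, funext fun j => (hconn i₀ j).imp_of_preserves (p := fun k => x k = x i₀)
      (fun u v huv hu => ?_) rfl⟩
    exact (hM.eq_of_mulVec_eq_zero hsymm hx huv).trans hu
  · rintro ⟨c, rfl⟩
    have hconst : (fun _ => c) = c • (1 : ι → ℝ) := by
      funext
      rw [Pi.smul_apply, Pi.one_apply, smul_eq_mul, mul_one]
    rw [hconst, mulVec_smul, hM.mulVec_one, smul_zero]

end IsLaplacian

end Matrix

theorem strongly_connected_left_eigenvector_and_symmetrized_laplacian_general
    (N : ℕ)
    (a : Fin N → Fin N → ℝ)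
    (ha : ∀ i j, i ≠ j → 0 ≤ a i j)
    (hsc : ∀ i j : Fin N, Relation.ReflTransGen (fun u v : Fin N => 0 < a v u) i j)
    (L : Matrix (Fin N) (Fin N) ℝ)
    (hLdiag : ∀ i, L i i = ∑ j ∈ Finset.univ.erase i, a i j)
    (hLoff : ∀ i j, i ≠ j → L i j = -(a i j)) :
    ∃ r : Fin N → ℝ, (∀ i, 0 < r i) ∧ Matrix.vecMul r L = 0 ∧
      (Matrix.diagonal r * L + Lᵀ * Matrix.diagonal r).IsSymm ∧
      (∀ i j, i ≠ j → (Matrix.diagonal r * L + Lᵀ * Matrix.diagonal r) i j ≤ 0) ∧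
      (Matrix.diagonal r * L + Lᵀ * Matrix.diagonal r).mulVec (fun _ => (1 : ℝ)) = 0 ∧
      (Matrix.diagonal r * L + Lᵀ * Matrix.diagonal r).PosSemidef ∧
      (∀ x : Fin N → ℝ,
        (Matrix.diagonal r * L + Lᵀ * Matrix.diagonal r).mulVec x = 0 ↔
          ∃ c : ℝ, x = fun _ => c) := by
  have hL := isLaplacian_of_weights ha hLdiag hLoff
  have hconn := isStronglyConnected_of_weights hLoff hsc
  obtain ⟨r, hr, hrL⟩ := hL.exists_pos_vecMul_eq_zero hconn
  have hM := hL.symmetrizedLaplacian (fun i => (hr i).le) hrL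
  have hMsymm := isSymm_symmetrizedLaplacian r L
  exact ⟨r, hr, hrL, hMsymm, fun i j hij => hM.apply_nonpos_of_ne hij, hM.mulVec_one,
    hM.posSemidef hMsymm, hM.mulVec_eq_zero_iff hMsymm (hconn.symmetrizedLaplacian hL hr)⟩

/-- For a strongly connected weighted digraph with Laplacian `L`,
there is a positive vector `r` with `rᵀL = 0`, and `L̂ = RL + LᵀR`
(with `R = diag r`) is the Laplacian of a connected undirected weighted graph:
it is symmetric, has nonpositive off-diagonal entries, annihilates the all-ones
vector, is positive semidefinite, and its kernel is spanned by the all-ones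
vector. -/
theorem strongly_connected_left_eigenvector_and_symmetrized_laplacian
    (N : ℕ) (hN : 1 ≤ N)
    (a : Fin N → Fin N → ℝ)
    (ha : ∀ i j, i ≠ j → 0 ≤ a i j)
    (hsc : ∀ i j : Fin N, Relation.ReflTransGen (fun u v : Fin N => 0 < a v u) i j)
    (L : Matrix (Fin N) (Fin N) ℝ)
    (hLdiag : ∀ i, L i i = ∑ j ∈ Finset.univ.erase i, a i j)
    (hLoff : ∀ i j, i ≠ j → L i j = -(a i j)) :
    ∃ r : Fin N → ℝ, (∀ i, 0 < r i) ∧ Matrix.vecMul r L = 0 ∧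
      (Matrix.diagonal r * L + Lᵀ * Matrix.diagonal r).IsSymm ∧
      (∀ i j, i ≠ j → (Matrix.diagonal r * L + Lᵀ * Matrix.diagonal r) i j ≤ 0) ∧
      (Matrix.diagonal r * L + Lᵀ * Matrix.diagonal r).mulVec (fun _ => (1 : ℝ)) = 0 ∧
      (Matrix.diagonal r * L + Lᵀ * Matrix.diagonal r).PosSemidef ∧
      (∀ x : Fin N → ℝ,
        (Matrix.diagonal r * L + Lᵀ * Matrix.diagonal r).mulVec x = 0 ↔
          ∃ c : ℝ, x = fun _ => c) :=
  strongly_connected_left_eigenvector_and_symmetrized_laplacian_general N a ha hsc L hLdiag hLoff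
end

section
/- Let aᵢⱼ ≥ 0 (1 ≤ i ≠ j ≤ N) be weights of a strongly connected weighted digraph with Laplacian matrix L, let r ∈ ℝ^N be a positive vector with rᵀL = 0, R = diag(r₁, …, r_N), and L̂ := RL + LᵀR. Let λ₂(L̂) denote the smallest positive eigenvalue of the symmetric positive semidefinite matrix L̂. Then for every vector χ ∈ ℝ^N with all entries positive and every x ∈ ℝ^N with x ≠ 0 and χᵀx = 0, one has xᵀL̂x / xᵀx > λ₂(L̂)/N. -/
/-!
With `W i j = r i * a i j`, the condition `rᵀL = 0` says that `W` is balanced (every node has equal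
in- and out-weight), and then `xᵀL̂x = ∑ i j, W i j (x i - x j)²`. So `L̂` is positive semidefinite,
its kernel consists of the vectors constant along edges, hence of the constants by strong
connectivity, and the quadratic form is at least `λ₂ ‖y‖²` for `y ⊥ 𝟙`.

Subtracting the mean of `x` does not change the quadratic form and takes `(∑ xᵢ)² / N` off `‖x‖²`.
Finally `χᵀx = 0` with `χ > 0` forces `x` to take both signs; dropping an entry of sign opposite
to `∑ xᵢ` and applying Cauchy–Schwarz to the remaining `N - 1` entries gives
`(∑ xᵢ)² < (N - 1) ‖x‖²`, i.e. `‖x - x̄ 𝟙‖² > ‖x‖² / N`.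
-/

open Matrix

namespace Matrix

variable {n : Type*} [Fintype n]

theorem dotProduct_add_transpose_mulVec (M : Matrix n n ℝ) (z : n → ℝ) :
    z ⬝ᵥ (M + Mᵀ) *ᵥ z = 2 * (z ⬝ᵥ M *ᵥ z) := by
  rw [add_mulVec, dotProduct_add, mulVec_transpose, dotProduct_comm z (z ᵥ* M),
    ← dotProduct_mulVec]
  ring

theorem _root_.OrthonormalBasis.sum_dotProduct_mul_dotProduct
    (b : OrthonormalBasis n ℝ (EuclideanSpace ℝ n)) (u v : n → ℝ) :
    ∑ j, (⇑(b j) ⬝ᵥ u) * (⇑(b j) ⬝ᵥ v) = u ⬝ᵥ v := by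
  have h := b.sum_inner_mul_inner (WithLp.toLp 2 u) (WithLp.toLp 2 v)
  simp only [EuclideanSpace.inner_eq_star_dotProduct, star_trivial] at h
  rw [dotProduct_comm, ← h]
  exact Finset.sum_congr rfl fun j _ => by rw [dotProduct_comm v]

theorem PosSemidef.mul_dotProduct_self_le_dotProduct_mulVec [DecidableEq n]
    {A : Matrix n n ℝ} (hA : A.PosSemidef) {lam : ℝ}
    (hlam : ∀ ν, 0 < ν → (∃ v, v ≠ 0 ∧ A *ᵥ v = ν • v) → lam ≤ ν)
    {y : n → ℝ} (hy : ∀ v, A *ᵥ v = 0 → v ⬝ᵥ y = 0) :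
    lam * (y ⬝ᵥ y) ≤ y ⬝ᵥ A *ᵥ y := by
  set b := hA.1.eigenvectorBasis
  have hsymm : Aᵀ = A := by
    simpa [conjTranspose_eq_transpose_of_trivial] using hA.1.eq
  have hAb : ∀ j, ⇑(b j) ⬝ᵥ A *ᵥ y = hA.1.eigenvalues j * (⇑(b j) ⬝ᵥ y) := fun j => by
    rw [dotProduct_mulVec, ← mulVec_transpose, hsymm, hA.1.mulVec_eigenvectorBasis,
      smul_dotProduct, smul_eq_mul]
  rw [← b.sum_dotProduct_mul_dotProduct y y, ← b.sum_dotProduct_mul_dotProduct y (A *ᵥ y),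
    Finset.mul_sum]
  refine Finset.sum_le_sum fun j _ => ?_
  rw [hAb]
  rcases (hA.eigenvalues_nonneg j).eq_or_lt with hzero | hpos
  · have hker : A *ᵥ ⇑(b j) = 0 := by
      rw [hA.1.mulVec_eigenvectorBasis, ← hzero, zero_smul]
    simp [hy _ hker]
  · have hb : (⇑(b j) : n → ℝ) ≠ 0 := fun h0 =>
      b.orthonormal.ne_zero j (WithLp.ofLp_injective 2 h0)
    have := hlam _ hpos ⟨_, hb, hA.1.mulVec_eigenvectorBasis j⟩
    nlinarith [mul_self_nonneg (⇑(b j) ⬝ᵥ y)]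

variable [DecidableEq n]

def weightedLaplacian (W : Matrix n n ℝ) : Matrix n n ℝ :=
  diagonal (fun i => ∑ j, W i j) - W

-- The diagonal of `a` cancels in `a.weightedLaplacian`, so the loop weights `a i i` are irrelevant.
theorem eq_weightedLaplacian {a L : Matrix n n ℝ}
    (hLdiag : ∀ i, L i i = ∑ j ∈ Finset.univ.erase i, a i j)
    (hLoff : ∀ i j, i ≠ j → L i j = -a i j) : L = a.weightedLaplacian := by
  ext i j
  rcases eq_or_ne i j with rfl | hij
  · simp [weightedLaplacian, hLdiag, Finset.sum_erase_eq_sub]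
  · simp [weightedLaplacian, hLoff i j hij, hij]

theorem diagonal_mul_weightedLaplacian (r : n → ℝ) (W : Matrix n n ℝ) :
    diagonal r * W.weightedLaplacian = (diagonal r * W).weightedLaplacian := by
  ext i j
  simp [weightedLaplacian, mul_sub, diagonal_mul, Finset.mul_sum, diagonal_apply]

theorem one_vecMul_weightedLaplacian (W : Matrix n n ℝ) :
    1 ᵥ* W.weightedLaplacian = fun j => ∑ i, W j i - ∑ i, W i j := by
  ext j
  simp [weightedLaplacian, vecMul, dotProduct, sub_apply, diagonal_apply]

theorem dotProduct_weightedLaplacian_mulVec (W : Matrix n n ℝ) (z : n → ℝ) :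
    z ⬝ᵥ W.weightedLaplacian *ᵥ z = ∑ i, ∑ j, W i j * z i * (z i - z j) := by
  rw [weightedLaplacian, sub_mulVec, dotProduct_sub]
  simp only [dotProduct, mulVec_diagonal]
  simp only [mulVec, dotProduct, Finset.mul_sum, Finset.sum_mul, ← Finset.sum_sub_distrib]
  exact Finset.sum_congr rfl fun i _ => Finset.sum_congr rfl fun j _ => by ring

end Matrix

section DirichletEnergy

variable {n : Type*} {W : Matrix n n ℝ}

theorem mul_sq_sub_nonneg (hW : ∀ i j, i ≠ j → 0 ≤ W i j) (v : n → ℝ) (i j : n) :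
    0 ≤ W i j * (v i - v j) ^ 2 := by
  rcases eq_or_ne i j with rfl | hij
  · simp
  · exact mul_nonneg (hW i j hij) (sq_nonneg _)

variable [Fintype n]

def dirichletEnergy (W : Matrix n n ℝ) (v : n → ℝ) : ℝ :=
  ∑ i, ∑ j, W i j * (v i - v j) ^ 2

theorem dirichletEnergy_sub_const (W : Matrix n n ℝ) (v : n → ℝ) (c : ℝ) :
    dirichletEnergy W (fun i => v i - c) = dirichletEnergy W v := by
  simp only [dirichletEnergy, sub_sub_sub_cancel_right]

theorem dirichletEnergy_nonneg (hW : ∀ i j, i ≠ j → 0 ≤ W i j) (v : n → ℝ) :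
    0 ≤ dirichletEnergy W v :=
  Finset.sum_nonneg fun i _ => Finset.sum_nonneg fun j _ => mul_sq_sub_nonneg hW v i j

theorem Matrix.two_mul_dotProduct_weightedLaplacian_mulVec [DecidableEq n]
    (hbal : ∀ i, ∑ j, W j i = ∑ j, W i j) (z : n → ℝ) :
    2 * (z ⬝ᵥ W.weightedLaplacian *ᵥ z) = dirichletEnergy W z := by
  have hsq : ∑ i, ∑ j, W i j * z j ^ 2 = ∑ i, ∑ j, W i j * z i ^ 2 := by
    rw [Finset.sum_comm]
    simp only [← Finset.sum_mul, hbal]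
  have hexpand : ∀ i j, W i j * (z i - z j) ^ 2
      = 2 * (W i j * z i * (z i - z j)) + (W i j * z j ^ 2 - W i j * z i ^ 2) := by
    intro i j; ring
  simp only [dirichletEnergy, hexpand, Finset.sum_add_distrib, Finset.sum_sub_distrib, hsq,
    ← Finset.mul_sum, dotProduct_weightedLaplacian_mulVec]
  ring

theorem eq_of_dirichletEnergy_eq_zero (hW : ∀ i j, i ≠ j → 0 ≤ W i j) {v : n → ℝ}
    (hv : dirichletEnergy W v = 0) {i j : n} (hij : 0 < W i j) : v i = v j := by
  have hrow := (Fintype.sum_eq_zero_iff_of_nonneg fun i =>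
    Finset.sum_nonneg fun j _ => mul_sq_sub_nonneg hW v i j).mp hv
  have hterm := (Fintype.sum_eq_zero_iff_of_nonneg (mul_sq_sub_nonneg hW v i)).mp
    (congrFun hrow i)
  have hsq : (v i - v j) ^ 2 = 0 := (mul_eq_zero.mp (congrFun hterm j)).resolve_left hij.ne'
  exact sub_eq_zero.mp (pow_eq_zero_iff two_ne_zero |>.mp hsq)

theorem eq_of_dirichletEnergy_eq_zero_of_reflTransGen (hW : ∀ i j, i ≠ j → 0 ≤ W i j)
    {v : n → ℝ} (hv : dirichletEnergy W v = 0) {i j : n}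
    (hij : Relation.ReflTransGen (fun u w => 0 < W w u) i j) : v i = v j := by
  induction hij with
  | refl => rfl
  | tail _ hedge ih => exact ih.trans (eq_of_dirichletEnergy_eq_zero hW hv hedge).symm

end DirichletEnergy

theorem dotProduct_diagonal_mul_add_transpose_mulVec {n : Type*} [Fintype n] [DecidableEq n]
    {a L : Matrix n n ℝ} {r : n → ℝ}
    (hLdiag : ∀ i, L i i = ∑ j ∈ Finset.univ.erase i, a i j)
    (hLoff : ∀ i j, i ≠ j → L i j = -a i j) (hrL : r ᵥ* L = 0) (z : n → ℝ) :
    z ⬝ᵥ (diagonal r * L + Lᵀ * diagonal r) *ᵥ z = dirichletEnergy (diagonal r * a) z := by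
  have hRL : diagonal r * L = (diagonal r * a).weightedLaplacian := by
    rw [eq_weightedLaplacian hLdiag hLoff, diagonal_mul_weightedLaplacian]
  have hbal : ∀ i, ∑ j, (diagonal r * a) j i = ∑ j, (diagonal r * a) i j := by
    intro i
    have hr : (1 : n → ℝ) ᵥ* diagonal r = r := funext fun j => by simp [vecMul_diagonal]
    have := congrFun (one_vecMul_weightedLaplacian (diagonal r * a)) i
    rw [← hRL, ← vecMul_vecMul, hr, hrL, Pi.zero_apply] at this
    linarith
  rw [show Lᵀ * diagonal r = (diagonal r * L)ᵀ by rw [transpose_mul, diagonal_transpose], hRL,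
    dotProduct_add_transpose_mulVec, two_mul_dotProduct_weightedLaplacian_mulVec hbal]

section Vectors

variable {n : Type*} [Fintype n]

theorem exists_neg_of_dotProduct_eq_zero {χ x : n → ℝ} (hχ : ∀ i, 0 < χ i) (hx : x ≠ 0)
    (h : χ ⬝ᵥ x = 0) : ∃ i, x i < 0 := by
  by_contra! hnonneg
  have hterm := (Fintype.sum_eq_zero_iff_of_nonneg fun i =>
    mul_nonneg (hχ i).le (hnonneg i)).mp h
  exact hx (funext fun i => (mul_eq_zero.mp (congrFun hterm i)).resolve_left (hχ i).ne')

theorem exists_pos_of_dotProduct_eq_zero {χ x : n → ℝ} (hχ : ∀ i, 0 < χ i) (hx : x ≠ 0)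
    (h : χ ⬝ᵥ x = 0) : ∃ i, 0 < x i := by
  obtain ⟨i, hi⟩ := exists_neg_of_dotProduct_eq_zero hχ (neg_ne_zero.mpr hx)
    (by rw [dotProduct_neg, h, neg_zero])
  exact ⟨i, neg_neg_iff_pos.mp hi⟩

theorem sq_sum_lt_of_sum_nonneg_of_neg [DecidableEq n] {x : n → ℝ} (hsum : 0 ≤ ∑ i, x i)
    {k : n} (hk : x k < 0) : (∑ i, x i) ^ 2 < (Fintype.card n - 1) * (x ⬝ᵥ x) := by
  have hsplit := Finset.add_sum_erase Finset.univ x (Finset.mem_univ k)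
  have hcard : ((Finset.univ.erase k).card : ℝ) = Fintype.card n - 1 := by
    rw [Finset.card_erase_of_mem (Finset.mem_univ k), Finset.card_univ,
      Nat.cast_sub (Fintype.card_pos_iff.mpr ⟨k⟩), Nat.cast_one]
  calc (∑ i, x i) ^ 2 < (∑ i ∈ Finset.univ.erase k, x i) ^ 2 :=
        pow_lt_pow_left₀ (by linarith) hsum two_ne_zero
    _ ≤ (Finset.univ.erase k).card * ∑ i ∈ Finset.univ.erase k, x i ^ 2 :=
        sq_sum_le_card_mul_sum_sq
    _ ≤ (Fintype.card n - 1) * (x ⬝ᵥ x) := by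
        rw [hcard, dotProduct]
        gcongr
        · rw [← hcard]; positivity
        · simp only [← sq]
          exact Finset.sum_le_sum_of_subset_of_nonneg (Finset.erase_subset _ _)
            fun i _ _ => sq_nonneg (x i)

theorem sq_sum_lt_card_sub_one_mul_dotProduct_self {x : n → ℝ} (hneg : ∃ i, x i < 0)
    (hpos : ∃ i, 0 < x i) : (∑ i, x i) ^ 2 < (Fintype.card n - 1) * (x ⬝ᵥ x) := by
  classical
  rcases le_total 0 (∑ i, x i) with hsum | hsum
  · obtain ⟨k, hk⟩ := hneg
    exact sq_sum_lt_of_sum_nonneg_of_neg hsum hk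
  · obtain ⟨k, hk⟩ := hpos
    have := sq_sum_lt_of_sum_nonneg_of_neg (x := -x) (by simpa using hsum) (k := k)
      (by simpa using hk)
    simpa [Finset.sum_neg_distrib] using this

theorem dotProduct_eq_zero_of_forall_eq {v y : n → ℝ} (hv : ∀ i j, v i = v j)
    (hy : ∑ i, y i = 0) : v ⬝ᵥ y = 0 := by
  rcases isEmpty_or_nonempty n with _ | ⟨⟨k⟩⟩
  · simp [dotProduct]
  · calc v ⬝ᵥ y = ∑ i, v k * y i := Finset.sum_congr rfl fun i _ => by rw [hv i k]
      _ = 0 := by rw [← Finset.mul_sum, hy, mul_zero]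

variable [Nonempty n] (x : n → ℝ)

theorem sum_sub_mean : ∑ i, (x i - (∑ j, x j) / Fintype.card n) = 0 := by
  rw [Finset.sum_sub_distrib, Finset.sum_const, Finset.card_univ, nsmul_eq_mul]
  field_simp
  ring

theorem dotProduct_self_sub_mean :
    (fun i => x i - (∑ j, x j) / Fintype.card n) ⬝ᵥ (fun i => x i - (∑ j, x j) / Fintype.card n)
      = x ⬝ᵥ x - (∑ i, x i) ^ 2 / Fintype.card n := by
  simp only [dotProduct, sub_mul, mul_sub, Finset.sum_sub_distrib, ← Finset.sum_mul,
    ← Finset.mul_sum, Finset.sum_const, Finset.card_univ, nsmul_eq_mul]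
  field_simp
  ring

end Vectors

theorem rayleigh_quotient_lower_bound_strongly_connected_general
    (N : ℕ) (hN : 1 ≤ N)
    (a : Fin N → Fin N → ℝ)
    (ha : ∀ i j, i ≠ j → 0 ≤ a i j)
    (hsc : ∀ i j : Fin N, Relation.ReflTransGen (fun u v : Fin N => 0 < a v u) i j)
    (L : Matrix (Fin N) (Fin N) ℝ)
    (hLdiag : ∀ i, L i i = ∑ j ∈ Finset.univ.erase i, a i j)
    (hLoff : ∀ i j, i ≠ j → L i j = -(a i j))
    (r : Fin N → ℝ) (hr : ∀ i, 0 < r i)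
    (hrL : Matrix.vecMul r L = 0)
    (Lhat : Matrix (Fin N) (Fin N) ℝ)
    (hLhat : Lhat = Matrix.diagonal r * L + Lᵀ * Matrix.diagonal r)
    (lam2 : ℝ) (hlam_pos : 0 < lam2)
    (hlam_min : ∀ ν : ℝ, 0 < ν →
      (∃ x : Fin N → ℝ, x ≠ 0 ∧ Lhat.mulVec x = ν • x) → lam2 ≤ ν) :
    ∀ χ : Fin N → ℝ, (∀ i, 0 < χ i) →
      ∀ x : Fin N → ℝ, x ≠ 0 → χ ⬝ᵥ x = 0 →
        lam2 / N < (x ⬝ᵥ Lhat.mulVec x) / (x ⬝ᵥ x) := by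
  intro χ hχ x hx hχx
  set W := diagonal r * of a
  have hW : ∀ i j, i ≠ j → 0 ≤ W i j := fun i j hij => by
    simpa [W, diagonal_mul, of_apply] using mul_nonneg (hr i).le (ha i j hij)
  have hquad : ∀ z, z ⬝ᵥ Lhat *ᵥ z = dirichletEnergy W z :=
    hLhat ▸ dotProduct_diagonal_mul_add_transpose_mulVec hLdiag hLoff hrL
  have hconst : ∀ v, Lhat *ᵥ v = 0 → ∀ i j, v i = v j := fun v hv i j =>
    eq_of_dirichletEnergy_eq_zero_of_reflTransGen hW (by rw [← hquad, hv, dotProduct_zero])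
      (Relation.ReflTransGen.mono (fun u w h => by simpa [W, diagonal_mul] using mul_pos (hr w) h)
        i j (hsc i j))
  have hpsd : Lhat.PosSemidef := by
    refine .of_dotProduct_mulVec_nonneg ?_ fun z => by
      simpa [hquad] using dirichletEnergy_nonneg hW z
    rw [hLhat, IsHermitian, conjTranspose_eq_transpose_of_trivial]
    simp [transpose_mul, add_comm]
  have : Nonempty (Fin N) := ⟨⟨0, hN⟩⟩
  have hspec := hpsd.mul_dotProduct_self_le_dotProduct_mulVec hlam_min
    fun v hv => dotProduct_eq_zero_of_forall_eq (hconst v hv) (sum_sub_mean x)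
  have hsum := sq_sum_lt_card_sub_one_mul_dotProduct_self
    (exists_neg_of_dotProduct_eq_zero hχ hx hχx) (exists_pos_of_dotProduct_eq_zero hχ hx hχx)
  rw [dotProduct_self_sub_mean, hquad, dirichletEnergy_sub_const, ← hquad] at hspec
  simp only [Fintype.card_fin] at hspec hsum
  have hN1 : (1 : ℝ) ≤ N := by exact_mod_cast hN
  have hNpos : (0 : ℝ) < N := by linarith
  have hxx : 0 < x ⬝ᵥ x :=
    pos_of_mul_pos_right ((sq_nonneg _).trans_lt hsum) (sub_nonneg.mpr hN1)
  rw [div_lt_div_iff₀ hNpos hxx]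
  calc lam2 * (x ⬝ᵥ x) < lam2 * (x ⬝ᵥ x - (∑ i, x i) ^ 2 / N) * N := by
        rw [mul_assoc, sub_mul, div_mul_cancel₀ _ hNpos.ne']
        nlinarith
    _ ≤ (x ⬝ᵥ Lhat *ᵥ x) * N := by gcongr

/-- For a strongly connected weighted digraph with Laplacian `L`,
positive left null vector `r`, `R = diag r`, `L̂ = RL + LᵀR`, and `λ₂` the
smallest positive eigenvalue of `L̂`: for every positive vector `χ` and every
nonzero `x` with `χᵀx = 0`, one has `xᵀL̂x / xᵀx > λ₂/N`. -/
theorem rayleigh_quotient_lower_bound_strongly_connected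
    (N : ℕ) (hN : 1 ≤ N)
    (a : Fin N → Fin N → ℝ)
    (ha : ∀ i j, i ≠ j → 0 ≤ a i j)
    (hsc : ∀ i j : Fin N, Relation.ReflTransGen (fun u v : Fin N => 0 < a v u) i j)
    (L : Matrix (Fin N) (Fin N) ℝ)
    (hLdiag : ∀ i, L i i = ∑ j ∈ Finset.univ.erase i, a i j)
    (hLoff : ∀ i j, i ≠ j → L i j = -(a i j))
    (r : Fin N → ℝ) (hr : ∀ i, 0 < r i)
    (hrL : Matrix.vecMul r L = 0)
    (Lhat : Matrix (Fin N) (Fin N) ℝ)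
    (hLhat : Lhat = Matrix.diagonal r * L + Lᵀ * Matrix.diagonal r)
    (lam2 : ℝ) (hlam_pos : 0 < lam2)
    (hlam_eig : ∃ x : Fin N → ℝ, x ≠ 0 ∧ Lhat.mulVec x = lam2 • x)
    (hlam_min : ∀ ν : ℝ, 0 < ν →
      (∃ x : Fin N → ℝ, x ≠ 0 ∧ Lhat.mulVec x = ν • x) → lam2 ≤ ν) :
    ∀ χ : Fin N → ℝ, (∀ i, 0 < χ i) →
      ∀ x : Fin N → ℝ, x ≠ 0 → χ ⬝ᵥ x = 0 →
        lam2 / N < (x ⬝ᵥ Lhat.mulVec x) / (x ⬝ᵥ x) :=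
  rayleigh_quotient_lower_bound_strongly_connected_general N hN a ha hsc L hLdiag hLoff r hr hrL
    Lhat hLhat lam2 hlam_pos hlam_min
end

section
/- Let A ∈ ℝ^{n×n} and C ∈ ℝ^{q×n}, and let Q ∈ ℝ^{n×n} be symmetric positive definite such that QA + AᵀQ − 2CᵀC is negative definite. Then the matrix A − Q⁻¹CᵀC is Hurwitz, i.e., every eigenvalue of A − Q⁻¹CᵀC over ℂ has negative real part. -/
/-! Lyapunov's argument: if `M v = μ v` with `v ≠ 0` over `ℂ`, then
`v* (Mᵀ Q + Q M) v = 2 Re μ · v* Q v`, where the left side is negative and `v* Q v` is positive,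
so `Re μ < 0`. For `M = A − Q⁻¹CᵀC` and symmetric `Q`, `Mᵀ Q + Q M = AᵀQ + QA − 2CᵀC`. -/

open Matrix

/-- A square real matrix is Hurwitz if every complex eigenvalue (root of the
characteristic polynomial of its complexification) has negative real part. -/
def IsHurwitz {n : ℕ} (M : Matrix (Fin n) (Fin n) ℝ) : Prop :=
  ∀ μ : ℂ, (M.map Complex.ofReal).charpoly.IsRoot μ → μ.re < 0

namespace Matrix

variable {ι : Type*} [Fintype ι]

theorem exists_mulVec_eq_smul_of_isRoot_charpoly {K : Type*} [Field K] [DecidableEq ι]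
    {N : Matrix ι ι K} {μ : K} (h : N.charpoly.IsRoot μ) :
    ∃ v : ι → K, v ≠ 0 ∧ N *ᵥ v = μ • v := by
  have hμ : Module.End.HasEigenvalue (toLin' N) μ := by
    rw [Module.End.hasEigenvalue_iff_mem_spectrum, spectrum_toLin']
    exact mem_spectrum_of_isRoot_charpoly h
  obtain ⟨v, hv⟩ := hμ.exists_hasEigenvector
  exact ⟨v, hv.2, by simpa using hv.apply_eq_smul⟩

theorem star_dotProduct_conjTranspose_mul_add_mul_mulVec {R : Type*} [CommRing R] [StarRing R]
    {N : Matrix ι ι R} (P : Matrix ι ι R) {μ : R} {v : ι → R} (hv : N *ᵥ v = μ • v) :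
    star v ⬝ᵥ (Nᴴ * P + P * N) *ᵥ v = (star μ + μ) * (star v ⬝ᵥ P *ᵥ v) := by
  have hstar : star v ᵥ* Nᴴ = star μ • star v := by rw [← star_mulVec, hv, star_smul]
  rw [add_mulVec, dotProduct_add, ← mulVec_mulVec, ← mulVec_mulVec, hv, dotProduct_mulVec,
    hstar, mulVec_smul, smul_dotProduct, dotProduct_smul, smul_eq_mul, smul_eq_mul, add_mul]

theorem re_star_dotProduct_map_ofReal_mulVec (S : Matrix ι ι ℝ) (v : ι → ℂ) :
    (star v ⬝ᵥ S.map Complex.ofReal *ᵥ v).re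
      = (fun i => (v i).re) ⬝ᵥ S *ᵥ (fun i => (v i).re)
        + (fun i => (v i).im) ⬝ᵥ S *ᵥ (fun i => (v i).im) := by
  simp only [dotProduct, mulVec, map_apply, Pi.star_apply, Complex.star_def, Finset.mul_sum,
    Complex.re_sum, Complex.mul_re, Complex.mul_im, Complex.conj_re, Complex.conj_im,
    Complex.ofReal_re, Complex.ofReal_im, ← Finset.sum_add_distrib]
  refine Finset.sum_congr rfl fun i _ => Finset.sum_congr rfl fun j _ => ?_
  ring

theorem PosDef.re_star_dotProduct_map_ofReal_mulVec_pos {S : Matrix ι ι ℝ} (hS : S.PosDef)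
    {v : ι → ℂ} (hv : v ≠ 0) : 0 < (star v ⬝ᵥ S.map Complex.ofReal *ᵥ v).re := by
  rw [re_star_dotProduct_map_ofReal_mulVec]
  have hre := hS.posSemidef.dotProduct_mulVec_nonneg (fun i => (v i).re)
  have him := hS.posSemidef.dotProduct_mulVec_nonneg (fun i => (v i).im)
  simp only [star_trivial] at hre him
  by_cases h : (fun i => (v i).re) = 0
  · have him_ne : (fun i => (v i).im) ≠ 0 := fun h' =>
      hv (funext fun i => Complex.ext (congrFun h i) (congrFun h' i))
    have := hS.dotProduct_mulVec_pos him_ne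
    simp only [star_trivial] at this
    linarith
  · have := hS.dotProduct_mulVec_pos h
    simp only [star_trivial] at this
    linarith

theorem transpose_sub_inv_mul_mul_add_mul_sub_inv_mul {R : Type*} [DecidableEq ι] [CommRing R]
    (A K : Matrix ι ι R) {Q : Matrix ι ι R} (hQT : Q.IsSymm) (hQ : IsUnit Q.det) :
    (A - Q⁻¹ * K)ᵀ * Q + Q * (A - Q⁻¹ * K) = Aᵀ * Q + Q * A - (Kᵀ + K) := by
  rw [transpose_sub, transpose_mul, transpose_nonsing_inv, hQT.eq, sub_mul, mul_sub,
    Matrix.mul_assoc, nonsing_inv_mul _ hQ, ← Matrix.mul_assoc, mul_nonsing_inv _ hQ,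
    Matrix.mul_one, Matrix.one_mul]
  abel

end Matrix

theorem isHurwitz_of_lyapunov {n : ℕ} {M Q : Matrix (Fin n) (Fin n) ℝ} (hQ : Q.PosDef)
    (hlyap : (-(Mᵀ * Q + Q * M)).PosDef) : IsHurwitz M := by
  intro μ hμ
  obtain ⟨v, hv0, hv⟩ := exists_mulVec_eq_smul_of_isRoot_charpoly hμ
  have hmap : (-(Mᵀ * Q + Q * M)).map Complex.ofReal
      = -((M.map Complex.ofReal)ᴴ * Q.map Complex.ofReal
        + Q.map Complex.ofReal * M.map Complex.ofReal) := by
    ext i j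
    simp [mul_apply]
  have hpos := hlyap.re_star_dotProduct_map_ofReal_mulVec_pos hv0
  rw [hmap, neg_mulVec, dotProduct_neg, star_dotProduct_conjTranspose_mul_add_mul_mulVec _ hv,
    Complex.star_def, add_comm, Complex.add_conj, Complex.neg_re, Complex.re_ofReal_mul] at hpos
  have hQv := hQ.re_star_dotProduct_map_ofReal_mulVec_pos hv0
  nlinarith

/-- If `Q` is symmetric positive definite and
`QA + AᵀQ − 2CᵀC` is negative definite, then `A − Q⁻¹CᵀC` is Hurwitz. -/
theorem observer_gain_Hurwitz
    (n q : ℕ)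
    (A : Matrix (Fin n) (Fin n) ℝ) (C : Matrix (Fin q) (Fin n) ℝ)
    (Q : Matrix (Fin n) (Fin n) ℝ)
    (hQ : Q.PosDef)
    (hLMI : (-(Q * A + Aᵀ * Q - (2 : ℝ) • (Cᵀ * C))).PosDef) :
    IsHurwitz (A - Q⁻¹ * (Cᵀ * C)) := by
  have hQsymm : Q.IsSymm := isHermitian_iff_isSymm.mp hQ.isHermitian
  refine isHurwitz_of_lyapunov hQ ?_
  rw [transpose_sub_inv_mul_mul_add_mul_sub_inv_mul _ _ hQsymm hQ.det_pos.ne'.isUnit]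
  convert hLMI using 2
  rw [transpose_mul, transpose_transpose, two_smul]
  abel
end
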